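/- arXiv:1502.01533 — 3 statements merged into one kernel-verified Lean document; each statement's English description precedes it below -/
import Mathlib

section
/- Linear reproduction: for every integer p ≥ 2 and every t ∈ ℝ, one has t = Σ_{k∈ℤ} [ (1/(p−1)) · Σ_{i=1−⌊p/2⌋}^{⌈p/2⌉−1} x_{k+i} ] · φ_k^[p](t), where the outer sum has only finitely many nonzero terms. -/
/-! Induction on the order, in the spirit of Marsden's identity. Substituting the Cox–de Boor
recursion into `∑ₖ aₖ φₖ^[p+2]` and shifting indices gives
`∑ⱼ (aⱼ₊₁₋ᵣ ωⱼ + aⱼ₋ᵣ (1 - ωⱼ)) φⱼ^[p+1]`, where `ωⱼ` is the relative position of `t` in the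
support `[x_lo, x_hi)` of `φⱼ^[p+1]`. For `aₖ = 1` this propagates the partition of unity
`∑ₖ φₖ^[p] = 1` from `p = 1`, where it says that the knot intervals tile `ℝ`. For `aₖ` the sum
of the knots inside the support of `φₖ^[p+2]`, the two coefficients are the corresponding sum
for `φⱼ^[p+1]` plus `x_hi`, resp. plus `x_lo`, and `x_lo + ωⱼ (x_hi - x_lo) = t`; so that sum
reproduces `(p - 1) t`. -/

/-- B-splines of order `p` on the strictly increasing knot sequence `x : ℤ → ℝ`,
defined by the recursion of Definition 2 of the paper.  `Bspline x p k` is the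
B-spline of order `p` (degree `p-1`) associated with the knot `x k`. -/
noncomputable def Bspline (x : ℤ → ℝ) : ℕ → ℤ → ℝ → ℝ
  | 0, _, _ => 0
  | 1, k, t => if x k ≤ t ∧ t < x (k + 1) then 1 else 0
  | p + 2, k, t =>
      ((t - x (k - ((p + 2) / 2 : ℕ))) /
          (x (k + ((p + 3) / 2 : ℕ) - 1) - x (k - ((p + 2) / 2 : ℕ)))) *
        Bspline x (p + 1) (k - 1 + ((p + 2) % 2 : ℕ)) t +
      ((x (k + ((p + 3) / 2 : ℕ)) - t) /
          (x (k + ((p + 3) / 2 : ℕ)) - x (k - ((p + 2) / 2 : ℕ) + 1))) *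
        Bspline x (p + 1) (k + ((p + 2) % 2 : ℕ)) t

open Filter Function

theorem exists_le_and_lt_add_one {α : Type*} [LinearOrder α] [NoMaxOrder α] {x : ℤ → α}
    (htop : Tendsto x atTop atTop) (hbot : Tendsto x atBot atBot) (t : α) :
    ∃ m : ℤ, x m ≤ t ∧ t < x (m + 1) := by
  obtain ⟨N, hN⟩ := (htop.eventually_gt_atTop t).exists_forall_of_atTop
  obtain ⟨M, hM⟩ := (hbot.eventually (eventually_le_atBot t)).exists_forall_of_atBot
  obtain ⟨m, hm, hmax⟩ := Int.exists_greatest_of_bdd (P := fun k => x k ≤ t)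
    ⟨N, fun k hk => not_lt.1 fun hNk => (hN k hNk.le).not_ge hk⟩ ⟨M, hM M le_rfl⟩
  exact ⟨m, hm, not_le.1 fun h => (hmax (m + 1) h).not_gt (lt_add_one m)⟩

namespace Bspline

variable {x : ℤ → ℝ}

theorem eq_zero_of_lt_or_le (hx : Monotone x) (p : ℕ) (k : ℤ) {t : ℝ}
    (ht : t < x (k - (p / 2 : ℕ)) ∨ x (k + ((p + 1) / 2 : ℕ)) ≤ t) : Bspline x p k t = 0 := by
  induction p generalizing k with
  | zero => rfl
  | succ p ih =>
    cases p with
    | zero =>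
      simp only [zero_add, Nat.reduceAdd, Nat.reduceDiv, Nat.cast_zero, Nat.cast_one,
        sub_zero] at ht
      rw [Bspline, if_neg (not_and_or.2 (ht.imp not_le.2 not_lt.2))]
    | succ p =>
      have hB₁ : Bspline x (p + 1) (k - 1 + ((p + 2) % 2 : ℕ)) t = 0 := by
        refine ih _ (ht.imp (fun h => h.trans_le (hx ?_)) (fun h => (hx ?_).trans h)) <;> omega
      have hB₂ : Bspline x (p + 1) (k + ((p + 2) % 2 : ℕ)) t = 0 := by
        refine ih _ (ht.imp (fun h => h.trans_le (hx ?_)) (fun h => (hx ?_).trans h)) <;> omega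
      rw [Bspline, hB₁, hB₂, mul_zero, mul_zero, add_zero]

theorem hasFiniteSupport (hx : Monotone x) (htop : Tendsto x atTop atTop)
    (hbot : Tendsto x atBot atBot) (p : ℕ) (t : ℝ) :
    HasFiniteSupport fun k => Bspline x p k t := by
  have hzero : ∀ᶠ k in cofinite, Bspline x p k t = 0 := by
    rw [Int.cofinite_eq, eventually_sup]
    refine ⟨?_, ?_⟩
    · filter_upwards [(hbot.comp (tendsto_atBot_add_const_right _ _ tendsto_id)).eventually
        (eventually_le_atBot t)] with k hk using eq_zero_of_lt_or_le hx p k (Or.inr hk)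
    · filter_upwards [(htop.comp (tendsto_atTop_add_const_right _ _ tendsto_id)).eventually_gt_atTop
        t] with k hk using eq_zero_of_lt_or_le hx p k (Or.inl hk)
  exact eventually_cofinite.1 hzero

/-- The Cox–de Boor weight: the relative position of `t` in the support
`[x (j - ⌊q/2⌋), x (j + ⌈q/2⌉))` of `Bspline x q j`. -/
noncomputable def weight (x : ℤ → ℝ) (q : ℕ) (j : ℤ) (t : ℝ) : ℝ :=
  (t - x (j - (q / 2 : ℕ))) / (x (j + ((q + 1) / 2 : ℕ)) - x (j - (q / 2 : ℕ)))

theorem add_two (hx : StrictMono x) (p : ℕ) (k : ℤ) (t : ℝ) :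
    Bspline x (p + 2) k t =
      weight x (p + 1) (k - 1 + (p % 2 : ℕ)) t * Bspline x (p + 1) (k - 1 + (p % 2 : ℕ)) t +
        (1 - weight x (p + 1) (k + (p % 2 : ℕ)) t) * Bspline x (p + 1) (k + (p % 2 : ℕ)) t := by
  have hlo₁ : k - 1 + (p % 2 : ℕ) - ((p + 1) / 2 : ℕ) = k - ((p + 2) / 2 : ℕ) := by omega
  have hhi₁ : k - 1 + (p % 2 : ℕ) + ((p + 1 + 1) / 2 : ℕ) = k + ((p + 3) / 2 : ℕ) - 1 := by omega
  have hlo₂ : k + (p % 2 : ℕ) - ((p + 1) / 2 : ℕ) = k - ((p + 2) / 2 : ℕ) + 1 := by omega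
  have hhi₂ : k + (p % 2 : ℕ) + ((p + 1 + 1) / 2 : ℕ) = k + ((p + 3) / 2 : ℕ) := by omega
  have hlt : x (k - ((p + 2) / 2 : ℕ) + 1) < x (k + ((p + 3) / 2 : ℕ)) := hx (by omega)
  rw [Bspline, weight, weight, hlo₁, hhi₁, hlo₂, hhi₂, one_sub_div (sub_ne_zero.2 hlt.ne'),
    Nat.add_mod_right, sub_sub_sub_cancel_right]

theorem finsum_mul_add_two (hx : StrictMono x) (htop : Tendsto x atTop atTop)
    (hbot : Tendsto x atBot atBot) (p : ℕ) (t : ℝ) (a : ℤ → ℝ) :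
    ∑ᶠ k, a k * Bspline x (p + 2) k t =
      ∑ᶠ j, (a (j + 1 - (p % 2 : ℕ)) * weight x (p + 1) j t +
        a (j - (p % 2 : ℕ)) * (1 - weight x (p + 1) j t)) * Bspline x (p + 1) j t := by
  set r : ℤ := ((p % 2 : ℕ) : ℤ)
  set w := fun j => weight x (p + 1) j t
  set B := fun j => Bspline x (p + 1) j t
  have hB : HasFiniteSupport B := hasFiniteSupport hx.monotone htop hbot (p + 1) t
  have hB₁ : HasFiniteSupport fun k => a k * w (k - 1 + r) * B (k - 1 + r) :=
    (hB.comp_of_injective fun _ _ h => by simpa using h).mul_right _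
  have hB₂ : HasFiniteSupport fun k => a k * (1 - w (k + r)) * B (k + r) :=
    (hB.comp_of_injective (add_left_injective r)).mul_right _
  calc ∑ᶠ k, a k * Bspline x (p + 2) k t
      = ∑ᶠ k, (a k * w (k - 1 + r) * B (k - 1 + r) + a k * (1 - w (k + r)) * B (k + r)) := by
        simp only [add_two hx, mul_add, mul_assoc, w, B, r]
    _ = ∑ᶠ k, a k * w (k - 1 + r) * B (k - 1 + r) + ∑ᶠ k, a k * (1 - w (k + r)) * B (k + r) :=
        finsum_add_distrib hB₁ hB₂
    _ = ∑ᶠ j, a (j + 1 - r) * w j * B j + ∑ᶠ j, a (j - r) * (1 - w j) * B j := by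
        congr 1
        · rw [← finsum_comp_equiv (Equiv.addRight (r - 1))
            (f := fun j => a (j + 1 - r) * w j * B j)]
          exact finsum_congr fun k => by simp only [Equiv.coe_addRight]; ring_nf
        · rw [← finsum_comp_equiv (Equiv.addRight r) (f := fun j => a (j - r) * (1 - w j) * B j)]
          exact finsum_congr fun k => by simp only [Equiv.coe_addRight, add_sub_cancel_right]
    _ = _ := by
        simp only [add_mul]
        exact (finsum_add_distrib (by fun_prop) (by fun_prop)).symm

theorem finsum_eq_one (hx : StrictMono x) (htop : Tendsto x atTop atTop)
    (hbot : Tendsto x atBot atBot) (p : ℕ) (t : ℝ) : ∑ᶠ k, Bspline x (p + 1) k t = 1 := by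
  induction p with
  | zero =>
    obtain ⟨m, hm, hm₁⟩ := exists_le_and_lt_add_one htop hbot t
    rw [finsum_eq_single _ m fun k hk => eq_zero_of_lt_or_le hx.monotone 1 k ?_]
    · simp [Bspline, hm, hm₁]
    · rcases hk.lt_or_gt with hkm | hmk
      · exact Or.inr ((hx.monotone (by omega : k + 1 ≤ m)).trans hm)
      · exact Or.inl (hm₁.trans_le (hx.monotone (by omega : m + 1 ≤ k - 0)))
  | succ p ih =>
    simpa only [Pi.one_apply, one_mul, add_sub_cancel, ih] using
      finsum_mul_add_two hx htop hbot p t 1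

/-- The sum of the knots strictly inside the support of `Bspline x q k`; divided by `q - 1`
it is the Greville abscissa of `Bspline x q k`. -/
noncomputable def knotSum (x : ℤ → ℝ) (q : ℕ) (k : ℤ) : ℝ :=
  ∑ i ∈ Finset.Icc (1 - ((q / 2 : ℕ) : ℤ)) (((q + 1) / 2 : ℕ) - 1), x (k + i)

theorem knotSum_eq_sum_Ioo (q : ℕ) (k : ℤ) :
    knotSum x q k = ∑ n ∈ Finset.Ioo (k - (q / 2 : ℕ)) (k + ((q + 1) / 2 : ℕ)), x n := by
  have hshift : Finset.Ioo (k - (q / 2 : ℕ)) (k + ((q + 1) / 2 : ℕ)) =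
      (Finset.Icc (1 - ((q / 2 : ℕ) : ℤ)) (((q + 1) / 2 : ℕ) - 1)).map (addLeftEmbedding k) := by
    rw [Finset.map_add_left_Icc]
    ext n
    simp only [Finset.mem_Icc, Finset.mem_Ioo]
    omega
  rw [hshift, Finset.sum_map]
  rfl

theorem knotSum_mul_weight_add (hx : StrictMono x) (p : ℕ) (j : ℤ) (t : ℝ) :
    knotSum x (p + 2) (j + 1 - (p % 2 : ℕ)) * weight x (p + 1) j t +
      knotSum x (p + 2) (j - (p % 2 : ℕ)) * (1 - weight x (p + 1) j t) =
      knotSum x (p + 1) j + t := by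
  set lo := j - ((p + 1) / 2 : ℕ)
  set hi := j + ((p + 1 + 1) / 2 : ℕ)
  have hlt : lo < hi := by omega
  have h_top : knotSum x (p + 2) (j + 1 - (p % 2 : ℕ)) = x hi + knotSum x (p + 1) j := by
    rw [knotSum_eq_sum_Ioo, knotSum_eq_sum_Ioo, ← Finset.sum_insert Finset.right_notMem_Ioo,
      Finset.Ioo_insert_right hlt]
    congr 1
    ext n
    simp only [Finset.mem_Ioo, Finset.mem_Ioc]
    omega
  have h_bot : knotSum x (p + 2) (j - (p % 2 : ℕ)) = x lo + knotSum x (p + 1) j := by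
    rw [knotSum_eq_sum_Ioo, knotSum_eq_sum_Ioo, ← Finset.sum_insert Finset.left_notMem_Ioo,
      Finset.Ioo_insert_left hlt]
    congr 1
    ext n
    simp only [Finset.mem_Ioo, Finset.mem_Ico]
    omega
  have h_weight : weight x (p + 1) j t * (x hi - x lo) = t - x lo :=
    div_mul_cancel₀ _ (sub_ne_zero.2 (hx hlt).ne')
  rw [h_top, h_bot]
  linear_combination h_weight

theorem finsum_knotSum_mul (hx : StrictMono x) (htop : Tendsto x atTop atTop)
    (hbot : Tendsto x atBot atBot) (p : ℕ) (t : ℝ) :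
    ∑ᶠ k, knotSum x (p + 1) k * Bspline x (p + 1) k t = p * t := by
  induction p with
  | zero => simp [knotSum]
  | succ p ih =>
    have hB : HasFiniteSupport fun j => Bspline x (p + 1) j t :=
      hasFiniteSupport hx.monotone htop hbot (p + 1) t
    calc ∑ᶠ k, knotSum x (p + 2) k * Bspline x (p + 2) k t
        = ∑ᶠ j, (knotSum x (p + 1) j * Bspline x (p + 1) j t + t * Bspline x (p + 1) j t) := by
          simp only [finsum_mul_add_two hx htop hbot, knotSum_mul_weight_add hx, add_mul]
      _ = p * t + t * 1 := by
          rw [finsum_add_distrib (by fun_prop) (by fun_prop), ih, ← mul_finsum,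
            finsum_eq_one hx htop hbot]
      _ = (p + 1 : ℕ) * t := by push_cast; ring

end Bspline

/-- linear reproduction: for every `p ≥ 2` and every `t`,
`t = ∑ₖ [(1/(p-1)) ∑_{i=1-⌊p/2⌋}^{⌈p/2⌉-1} x_{k+i}] φ_k^[p](t)`, the outer sum
having only finitely many nonzero terms. -/
theorem bspline_reproduces_identity
    (x : ℤ → ℝ) (hx : StrictMono x)
    (htop : Filter.Tendsto x Filter.atTop Filter.atTop)
    (hbot : Filter.Tendsto x Filter.atBot Filter.atBot)
    (p : ℕ) (hp : 2 ≤ p) (t : ℝ) :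
    {k : ℤ | ((1 / ((p : ℝ) - 1)) *
        ∑ i ∈ Finset.Icc (1 - ((p / 2 : ℕ) : ℤ)) (((p + 1) / 2 : ℕ) - 1), x (k + i)) *
        Bspline x p k t ≠ 0}.Finite ∧
    t = ∑ᶠ k : ℤ, ((1 / ((p : ℝ) - 1)) *
        ∑ i ∈ Finset.Icc (1 - ((p / 2 : ℕ) : ℤ)) (((p + 1) / 2 : ℕ) - 1), x (k + i)) *
        Bspline x p k t := by
  obtain ⟨q, rfl⟩ : ∃ q, p = q + 1 := ⟨p - 1, by omega⟩
  refine ⟨HasFiniteSupport.fun_mul_right _ (Bspline.hasFiniteSupport hx.monotone htop hbot _ t), ?_⟩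
  have hq : ((q + 1 : ℕ) : ℝ) - 1 = q := by push_cast; ring
  have hq₀ : (q : ℝ) ≠ 0 := by norm_cast; omega
  have hsum := Bspline.finsum_knotSum_mul hx htop hbot q t
  simp only [Bspline.knotSum] at hsum
  simp only [hq, mul_assoc, ← mul_finsum, hsum]
  field_simp
end

section
/- Reproduction of the power of maximal degree: for every integer p ≥ 2 and every t ∈ ℝ, one has t^{p−1} = Σ_{k∈ℤ} [ Π_{i=1−⌊p/2⌋}^{⌈p/2⌉−1} x_{k+i} ] · φ_k^[p](t), where the sum has only finitely many nonzero terms. -/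
/-!
Reindexing `φ_k^[p]` by its leftmost knot `j = k - ⌊p/2⌋` turns the recursion into the usual
Cox–de Boor recursion of `N_j^[p] = leftBspline x p j` on the knots `x_j, …, x_{j+p}`, and the
coefficient into `c_j^[p] = x_{j+1} ⋯ x_{j+p-1}`. Induct on the order: unfold `N_j^[p+1]`, shift
the summation index of the second term, and the coefficient of `N_j^[p]` becomes
`c_j^[p] (x_{j+p} (t - x_j) + x_j (x_{j+p} - t)) / (x_{j+p} - x_j) = t c_j^[p]`.
All sums are finite because only the `N_j^[p]` with `j₀ + 1 - p ≤ j ≤ j₀` are nonzero at `t`,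
where `[x_{j₀}, x_{j₀+1})` is the knot interval containing `t`.
-/

open Function Finset

theorem prod_Icc_eq_prod_range {M : Type*} [CommMonoid M] (f : ℤ → M) (k : ℤ) (m n : ℕ) :
    ∏ i ∈ Icc (1 - (m : ℤ)) (n - 1), f (k + i) = ∏ i ∈ range (m + n - 1), f (k - m + i + 1) := by
  symm
  refine prod_nbij' (fun i => (i : ℤ) + 1 - m) (fun i => (i - 1 + m).toNat) ?_ ?_ ?_ ?_
    fun i _ => congrArg f (by ring)
  all_goals
    intro i hi
    simp only [mem_range, mem_Icc] at hi ⊢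
    omega

theorem finsum_mul_add_mul_shift {R : Type*} [Semiring R] {f : ℤ → R} (hf : (support f).Finite)
    (a b : ℤ → R) :
    ∑ᶠ j, (a j * f j + b j * f (j + 1)) = ∑ᶠ j, (a j + b (j - 1)) * f j := by
  have hb : (support fun j => b j * f (j + 1)).Finite :=
    (hf.preimage (add_left_injective 1).injOn).subset fun j hj =>
      support_mul_subset_right (fun j => b j) (fun j => f (j + 1)) hj
  have hshift : ∑ᶠ j, b (j - 1) * f j = ∑ᶠ j, b j * f (j + 1) := by
    rw [← finsum_comp_equiv (Equiv.addRight 1)]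
    simp only [Equiv.coe_addRight, add_sub_cancel_right]
  simp only [add_mul]
  rw [finsum_add_distrib (hf.subset (support_mul_subset_right _ _)) hb, ← hshift,
    finsum_add_distrib (hf.subset (support_mul_subset_right _ _))
      (hf.subset (support_mul_subset_right _ _))]

theorem exists_mem_Ico_knots {x : ℤ → ℝ} (hx : StrictMono x)
    (htop : Filter.Tendsto x Filter.atTop Filter.atTop)
    (hbot : Filter.Tendsto x Filter.atBot Filter.atBot) (t : ℝ) :
    ∃ j : ℤ, t ∈ Set.Ico (x j) (x (j + 1)) := by
  obtain ⟨a, ha⟩ := (hbot.eventually (Filter.eventually_le_atBot t)).exists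
  obtain ⟨b, hb⟩ := (htop.eventually (Filter.eventually_gt_atTop t)).exists
  have hbdd : ∀ k ∈ {k : ℤ | x k ≤ t}, k ≤ b := fun k hk => (hx.lt_iff_lt.mp (hk.trans_lt hb)).le
  obtain ⟨j, hj, hmax⟩ := Int.exists_greatest_of_bdd ⟨b, hbdd⟩ ⟨a, ha⟩
  exact ⟨j, hj, not_le.mp fun h => by linarith [hmax (j + 1) h]⟩

noncomputable def leftBspline (x : ℤ → ℝ) : ℕ → ℤ → ℝ → ℝ
  | 0, _, _ => 0
  | 1, j, t => if x j ≤ t ∧ t < x (j + 1) then 1 else 0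
  | p + 2, j, t =>
      (t - x j) / (x (j + p + 1) - x j) * leftBspline x (p + 1) j t +
        (x (j + p + 2) - t) / (x (j + p + 2) - x (j + 1)) * leftBspline x (p + 1) (j + 1) t

theorem Bspline_eq_leftBspline (x : ℤ → ℝ) :
    ∀ (p : ℕ) (k : ℤ) (t : ℝ), Bspline x p k t = leftBspline x p (k - (p / 2 : ℕ)) t
  | 0, _, _ => rfl
  | 1, k, t => by simp [Bspline, leftBspline]
  | p + 2, k, t => by
    rw [Bspline, leftBspline, Bspline_eq_leftBspline x (p + 1), Bspline_eq_leftBspline x (p + 1)]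
    have hleft : k - 1 + ((p + 2) % 2 : ℕ) - ((p + 1) / 2 : ℕ) = k - ((p + 2) / 2 : ℕ) := by omega
    have hright : k + ((p + 2) % 2 : ℕ) - ((p + 1) / 2 : ℕ) = k - ((p + 2) / 2 : ℕ) + 1 := by omega
    have hend : k + ((p + 3) / 2 : ℕ) = k - ((p + 2) / 2 : ℕ) + p + 2 := by omega
    rw [hleft, hright, hend,
      show k - ((p + 2) / 2 : ℕ) + p + 2 - 1 = k - ((p + 2) / 2 : ℕ) + p + 1 by ring]

theorem mem_Ico_of_leftBspline_ne_zero {x : ℤ → ℝ} (hx : Monotone x) :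
    ∀ {p : ℕ} {j : ℤ} {t : ℝ}, leftBspline x p j t ≠ 0 → t ∈ Set.Ico (x j) (x (j + p))
  | 0, _, _, h => absurd rfl h
  | 1, _, _, h => Classical.byContradiction fun hc => h (if_neg hc)
  | p + 2, j, t, h => by
    rw [leftBspline] at h
    rcases ne_or_eq (leftBspline x (p + 1) j t) 0 with h' | h'
    · obtain ⟨hl, hr⟩ := mem_Ico_of_leftBspline_ne_zero hx h'
      exact ⟨hl, hr.trans_le (hx (by push_cast; omega))⟩
    · have h'' : leftBspline x (p + 1) (j + 1) t ≠ 0 := by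
        rintro h''
        simp [h', h''] at h
      obtain ⟨hl, hr⟩ := mem_Ico_of_leftBspline_ne_zero hx h''
      exact ⟨(hx (by omega)).trans hl, hr.trans_le (hx (by push_cast; omega))⟩

theorem support_leftBspline_subset {x : ℤ → ℝ} (hx : StrictMono x) {t : ℝ} {j₀ : ℤ}
    (ht : t ∈ Set.Ico (x j₀) (x (j₀ + 1))) (p : ℕ) :
    (support fun j => leftBspline x p j t) ⊆ Set.Icc (j₀ + 1 - p) j₀ := by
  intro j hj
  obtain ⟨hl, hr⟩ := mem_Ico_of_leftBspline_ne_zero hx.monotone hj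
  have h₁ : j < j₀ + 1 := hx.lt_iff_lt.mp (hl.trans_lt ht.2)
  have h₂ : j₀ < j + p := hx.lt_iff_lt.mp (ht.1.trans_lt hr)
  constructor <;> omega

theorem prod_knots_blend_eq_mul {x : ℤ → ℝ} (hx : StrictMono x) (p : ℕ) (j : ℤ) (t : ℝ) :
    (∏ i ∈ range (p + 1), x (j + i + 1)) * ((t - x j) / (x (j + p + 1) - x j)) +
      (∏ i ∈ range (p + 1), x (j - 1 + i + 1)) *
        ((x (j - 1 + p + 2) - t) / (x (j - 1 + p + 2) - x (j - 1 + 1))) =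
      t * ∏ i ∈ range p, x (j + i + 1) := by
  rw [prod_range_succ, prod_range_succ']
  simp only [Nat.cast_add, Nat.cast_one, Nat.cast_zero]
  have hne : x (j + p + 1) - x j ≠ 0 := sub_ne_zero.mpr (hx (by omega)).ne'
  rw [show j - 1 + p + 2 = j + p + 1 by ring, sub_add_cancel, add_zero, sub_add_cancel]
  simp only [show ∀ i : ℕ, j - 1 + (i + 1 : ℤ) + 1 = j + i + 1 from fun i => by ring]
  field_simp
  ring

theorem finsum_prod_mul_leftBspline_eq_pow {x : ℤ → ℝ} (hx : StrictMono x) {t : ℝ} {j₀ : ℤ}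
    (ht : t ∈ Set.Ico (x j₀) (x (j₀ + 1))) :
    ∀ p : ℕ, ∑ᶠ j, (∏ i ∈ range p, x (j + i + 1)) * leftBspline x (p + 1) j t = t ^ p
  | 0 => by
    have hj : ∀ j ≠ j₀, leftBspline x 1 j t = 0 := fun j hj => by
      by_contra h
      have := support_leftBspline_subset hx ht 1 h
      simp_all
    rw [finsum_eq_single _ j₀ fun j hj' => by rw [hj j hj', mul_zero]]
    simp [leftBspline, ht.1, ht.2]
  | p + 1 => by
    simp only [leftBspline, mul_add, ← mul_assoc]
    rw [finsum_mul_add_mul_shift ((Set.finite_Icc _ _).subset (support_leftBspline_subset hx ht _))]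
    simp only [prod_knots_blend_eq_mul hx, mul_assoc, ← mul_finsum]
    rw [finsum_prod_mul_leftBspline_eq_pow hx ht p, pow_succ']

/-- reproduction of the power of maximal degree: for every `p ≥ 2`
and every `t`, `t^{p-1} = ∑ₖ [∏_{i=1-⌊p/2⌋}^{⌈p/2⌉-1} x_{k+i}] φ_k^[p](t)`, the
sum having only finitely many nonzero terms. -/
theorem bspline_reproduces_top_power
    (x : ℤ → ℝ) (hx : StrictMono x)
    (htop : Filter.Tendsto x Filter.atTop Filter.atTop)
    (hbot : Filter.Tendsto x Filter.atBot Filter.atBot)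
    (p : ℕ) (hp : 2 ≤ p) (t : ℝ) :
    {k : ℤ | (∏ i ∈ Finset.Icc (1 - ((p / 2 : ℕ) : ℤ)) (((p + 1) / 2 : ℕ) - 1), x (k + i)) *
        Bspline x p k t ≠ 0}.Finite ∧
    t ^ (p - 1) = ∑ᶠ k : ℤ,
      (∏ i ∈ Finset.Icc (1 - ((p / 2 : ℕ) : ℤ)) (((p + 1) / 2 : ℕ) - 1), x (k + i)) *
        Bspline x p k t := by
  obtain ⟨j₀, ht⟩ := exists_mem_Ico_knots hx htop hbot t
  set g : ℤ → ℝ := fun j => (∏ i ∈ range (p - 1), x (j + i + 1)) * leftBspline x p j t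
  have hterm : ∀ k, (∏ i ∈ Icc (1 - ((p / 2 : ℕ) : ℤ)) (((p + 1) / 2 : ℕ) - 1), x (k + i)) *
      Bspline x p k t = g (k - (p / 2 : ℕ)) := fun k => by
    rw [prod_Icc_eq_prod_range, Bspline_eq_leftBspline, show p / 2 + (p + 1) / 2 = p by omega]
  simp only [hterm]
  constructor
  · exact ((Set.finite_Icc _ _).subset (support_leftBspline_subset hx ht p)).preimage
      (sub_left_injective.injOn) |>.subset fun k hk => support_mul_subset_right _ _ hk
  · calc t ^ (p - 1) = ∑ᶠ j, g j := by
          rw [← finsum_prod_mul_leftBspline_eq_pow hx ht (p - 1), Nat.sub_add_cancel (by omega)]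
      _ = ∑ᶠ k, g (k - (p / 2 : ℕ)) := (finsum_comp_equiv (Equiv.subRight _)).symm
end

section
/- Lifting step for B-spline power coefficients: let p ≥ 3 be an integer and let t_0, t_1, …, t_p be real numbers with t_p ≠ t_0. For 0 ≤ q ≤ p−1 define a_q = e_q(t_1, …, t_{p−1})/C(p−1,q), b_q = e_q(t_0, …, t_{p−2})/C(p−1,q), c_q = e_q(t_2, …, t_p)/C(p−1,q), and m_q = e_q(t_0, t_2, t_3, …, t_{p−2}, t_p)/C(p−1,q) (the latter list consisting of t_0, t_p and the p−3 values t_2, …, t_{p−2}), where e_q denotes the elementary symmetric polynomial of degree q and C(p−1,q) the binomial coefficient. Define the lifting parameters L₋ = (t_p − t_{p−1})/(t_p − t_0) and L₊ = (t_1 − t_0)/(t_p − t_0). Then for every q ∈ {0, 1, …, p−1}: a_q − L₋·b_q − L₊·c_q = ((t_{p−1} − t_1)/(t_p − t_0)) · m_q. -/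
/-!
The four knot multisets share the knots `t 2, …, t (p - 2)` and differ only in the two remaining
knots, and `e_q` of a multiset `S` enlarged by `x, y` is `a + (x + y) b + x y c` with `a, b, c`
depending only on `S` and `q`. The identity is therefore a combination of three identities, for
`1`, `x + y` and `x y`, in the four knots `t 0, t 1, t (p - 1), t p`; the normalisation by
`C(p - 1, q)` is common to all terms.
-/

namespace Multiset

variable {R : Type*}

@[simp]
theorem esymm_zero [CommSemiring R] (s : Multiset R) : s.esymm 0 = 1 := by
  simp [esymm]

theorem esymm_cons_succ [CommSemiring R] (x : R) (s : Multiset R) (n : ℕ) :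
    (x ::ₘ s).esymm (n + 1) = s.esymm (n + 1) + x * s.esymm n := by
  simp only [esymm, powersetCard_cons, map_add, sum_add, map_map, Function.comp_def, prod_cons,
    sum_map_mul_left]

theorem exists_esymm_cons_cons_eq [CommSemiring R] (s : Multiset R) (n : ℕ) :
    ∃ a b c : R, ∀ x y : R, (x ::ₘ y ::ₘ s).esymm n = a + (x + y) * b + x * y * c := by
  match n with
  | 0 => exact ⟨1, 0, 0, fun x y => by simp⟩
  | 1 =>
    refine ⟨s.esymm 1, 1, 0, fun x y => ?_⟩
    simp only [esymm_cons_succ, esymm_zero]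
    ring
  | n + 2 =>
    refine ⟨s.esymm (n + 2), s.esymm (n + 1), s.esymm n, fun x y => ?_⟩
    simp only [esymm_cons_succ]
    ring

theorem esymm_cons_cons_lifting [CommRing R] (s : Multiset R) (n : ℕ) (x₀ x₁ x₂ x₃ : R) :
    (x₃ - x₀) * (x₁ ::ₘ x₂ ::ₘ s).esymm n - (x₃ - x₂) * (x₀ ::ₘ x₁ ::ₘ s).esymm n
      - (x₁ - x₀) * (x₂ ::ₘ x₃ ::ₘ s).esymm n = (x₂ - x₁) * (x₀ ::ₘ x₃ ::ₘ s).esymm n := by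
  obtain ⟨a, b, c, h⟩ := exists_esymm_cons_cons_eq s n
  simp only [h]
  ring

theorem esymm_cons_cons_lifting_div [Field R] (s : Multiset R) (n : ℕ) {x₀ x₃ : R}
    (h : x₃ ≠ x₀) (x₁ x₂ : R) :
    (x₁ ::ₘ x₂ ::ₘ s).esymm n - (x₃ - x₂) / (x₃ - x₀) * (x₀ ::ₘ x₁ ::ₘ s).esymm n
      - (x₁ - x₀) / (x₃ - x₀) * (x₂ ::ₘ x₃ ::ₘ s).esymm n
      = (x₂ - x₁) / (x₃ - x₀) * (x₀ ::ₘ x₃ ::ₘ s).esymm n := by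
  have hd : x₃ - x₀ ≠ 0 := sub_ne_zero.mpr h
  field_simp
  linear_combination esymm_cons_cons_lifting s n x₀ x₁ x₂ x₃

end Multiset

theorem Finset.map_val_insert_insert {α β : Type*} [DecidableEq α] (f : α → β) {i j : α}
    {s : Finset α} (hij : i ≠ j) (hi : i ∉ s) (hj : j ∉ s) :
    (insert i (insert j s)).val.map f = f i ::ₘ f j ::ₘ s.val.map f := by
  rw [Finset.insert_val_of_notMem (by simp [hij, hi]), Finset.insert_val_of_notMem hj]
  simp only [Multiset.map_cons]

theorem bspline_powerCoef_lifting_step_general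
    (p : ℕ) (hp : 3 ≤ p) (t : ℕ → ℝ) (hne : t p ≠ t 0)
    (q : ℕ) :
    (((Finset.Ico 1 p).val.map t).esymm q / (Nat.choose (p - 1) q) : ℝ) -
      ((t p - t (p - 1)) / (t p - t 0)) *
        (((Finset.Ico 0 (p - 1)).val.map t).esymm q / (Nat.choose (p - 1) q)) -
      ((t 1 - t 0) / (t p - t 0)) *
        (((Finset.Icc 2 p).val.map t).esymm q / (Nat.choose (p - 1) q)) =
    ((t (p - 1) - t 1) / (t p - t 0)) *
      ((t 0 ::ₘ t p ::ₘ ((Finset.Icc 2 (p - 2)).val.map t)).esymm q /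
        (Nat.choose (p - 1) q)) := by
  have map_eq_cons_cons (s : Finset ℕ) (i j : ℕ) (hij : i ≠ j) (hi : i < 2 ∨ p - 2 < i)
      (hj : j < 2 ∨ p - 2 < j) (hs : ∀ k, k ∈ s ↔ k = i ∨ k = j ∨ 2 ≤ k ∧ k ≤ p - 2) :
      s.val.map t = t i ::ₘ t j ::ₘ (Finset.Icc 2 (p - 2)).val.map t := by
    have hs' : s = insert i (insert j (Finset.Icc 2 (p - 2))) := by
      ext k
      simp only [hs, Finset.mem_insert, Finset.mem_Icc]
    rw [hs', Finset.map_val_insert_insert t hij (by rw [Finset.mem_Icc]; omega)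
      (by rw [Finset.mem_Icc]; omega)]
  rw [map_eq_cons_cons (Finset.Ico 1 p) 1 (p - 1) (by omega) (by omega) (by omega)
      (fun k => by rw [Finset.mem_Ico]; omega),
    map_eq_cons_cons (Finset.Ico 0 (p - 1)) 0 1 (by omega) (by omega) (by omega)
      (fun k => by rw [Finset.mem_Ico]; omega),
    map_eq_cons_cons (Finset.Icc 2 p) (p - 1) p (by omega) (by omega) (by omega)
      (fun k => by rw [Finset.mem_Icc]; omega)]
  linear_combination
    Multiset.esymm_cons_cons_lifting_div _ q hne (t 1) (t (p - 1)) / ((p - 1).choose q : ℝ)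

/-- lifting step for B-spline power coefficients
(Proposition 1 of the paper, with `k = 0`).  For knots `t 0, …, t p` with
`t p ≠ t 0`, the lifted power coefficient
`a_q - L₋ b_q - L₊ c_q` equals `((t_{p-1} - t_1)/(t_p - t_0)) m_q`
for every `q ∈ {0, …, p-1}`, where `a_q, b_q, c_q, m_q` are the normalised
elementary symmetric polynomials in the knot subsets
`{t_1,…,t_{p-1}}`, `{t_0,…,t_{p-2}}`, `{t_2,…,t_p}` and
`{t_0, t_2, …, t_{p-2}, t_p}` respectively, and
`L₋ = (t_p - t_{p-1})/(t_p - t_0)`, `L₊ = (t_1 - t_0)/(t_p - t_0)`. -/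
theorem bspline_powerCoef_lifting_step
    (p : ℕ) (hp : 3 ≤ p) (t : ℕ → ℝ) (hne : t p ≠ t 0)
    (q : ℕ) (hq : q ≤ p - 1) :
    (((Finset.Ico 1 p).val.map t).esymm q / (Nat.choose (p - 1) q) : ℝ) -
      ((t p - t (p - 1)) / (t p - t 0)) *
        (((Finset.Ico 0 (p - 1)).val.map t).esymm q / (Nat.choose (p - 1) q)) -
      ((t 1 - t 0) / (t p - t 0)) *
        (((Finset.Icc 2 p).val.map t).esymm q / (Nat.choose (p - 1) q)) =
    ((t (p - 1) - t 1) / (t p - t 0)) *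
      ((t 0 ::ₘ t p ::ₘ ((Finset.Icc 2 (p - 2)).val.map t)).esymm q /
        (Nat.choose (p - 1) q)) :=
  bspline_powerCoef_lifting_step_general p hp t hne q
end
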